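/- arXiv:0807.2930 — 3 statements merged into one kernel-verified Lean document; each statement's English description precedes it below -/
import Mathlib

section
/- For every integer n ≥ 1, the sum Σ_{d∈𝒟} r′_d(n) is at most 4√n + 2. -/
/-!
A pair `(u, v)` counted by `r′_d(n)` with `d < 0` squarefree is determined by `u` and the sign
of `v`, even without knowing `d`: from `|d| v² = 4n - u²` and unique factorization, `|d|` is the
squarefree part of `4n - u²` and `|v|` the square root of the rest. Distinct negative `d` have
disjoint solution sets, so the whole sum counts pairs `(u, ±1)` with `u ≤ ⌊√(4n)⌋`, of which
there are `2 (⌊2√n⌋ + 1) ≤ 4√n + 2`.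
-/

noncomputable section

/-- The set `𝒟` of negative squarefree integers `d` satisfying the Heegner condition
`d ≡ ν² (mod 4N)` for some `ν` coprime to `4N`. -/
def Dset (N : ℕ) : Set ℤ :=
  {d : ℤ | d < 0 ∧ Squarefree d ∧
    ∃ ν : ℤ, Int.gcd ν (4 * N) = 1 ∧ d ≡ ν ^ 2 [ZMOD (4 * N : ℤ)]}

/-- `r′_d(n)`: the number of pairs `(u, v) ∈ ℕ × ℤ` with `v ≠ 0` and `u² + |d| v² = 4n`. -/
def rprime (d : ℤ) (n : ℕ) : ℕ :=
  Nat.card {p : ℕ × ℤ // p.2 ≠ 0 ∧ (p.1 : ℤ) ^ 2 + |d| * p.2 ^ 2 = 4 * (n : ℤ)}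

open Set

theorem Nat.eq_of_squarefree_of_mul_sq_eq {a b c e : ℕ} (ha : Squarefree a) (hc : Squarefree c)
    (hb : b ≠ 0) (he : e ≠ 0) (h : a * b ^ 2 = c * e ^ 2) : a = c ∧ b = e := by
  have hac : a = c := by
    refine Nat.eq_of_factorization_eq ha.ne_zero hc.ne_zero fun p => ?_
    have hp := DFunLike.congr_fun (congrArg Nat.factorization h) p
    rw [Nat.factorization_mul ha.ne_zero (pow_ne_zero 2 hb),
      Nat.factorization_mul hc.ne_zero (pow_ne_zero 2 he)] at hp
    simp only [Finsupp.add_apply, Nat.factorization_pow, Finsupp.smul_apply, smul_eq_mul] at hp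
    -- `a_p + 2 b_p = c_p + 2 e_p` with `a_p, c_p ≤ 1`: compare parities
    have := ha.natFactorization_le_one p
    have := hc.natFactorization_le_one p
    omega
  subst hac
  exact ⟨rfl, Nat.pow_left_injective two_ne_zero
    (Nat.eq_of_mul_eq_mul_left (Nat.pos_of_ne_zero ha.ne_zero) h)⟩

def rprimeSet (d : ℤ) (n : ℕ) : Set (ℕ × ℤ) :=
  {p | p.2 ≠ 0 ∧ (p.1 : ℤ) ^ 2 + |d| * p.2 ^ 2 = 4 * n}

theorem rprime_eq_ncard (d : ℤ) (n : ℕ) : rprime d n = (rprimeSet d n).ncard :=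
  Nat.card_coe_set_eq _

section rprimeSet

variable {d : ℤ} {n : ℕ} {p : ℕ × ℤ}

theorem abs_le_of_mem_rprimeSet (hp : p ∈ rprimeSet d n) : |d| ≤ 4 * n := by
  obtain ⟨hv, h⟩ := hp
  have : 1 ≤ p.2 ^ 2 := by nlinarith [Int.one_le_abs hv, sq_abs p.2]
  nlinarith [abs_nonneg d, sq_nonneg (p.1 : ℤ)]

theorem fst_le_sqrt_of_mem_rprimeSet (hp : p ∈ rprimeSet d n) : p.1 ≤ Nat.sqrt (4 * n) := by
  refine Nat.le_sqrt'.2 ?_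
  zify
  nlinarith [hp.2, abs_nonneg d, sq_nonneg p.2]

theorem sign_mem_of_mem_rprimeSet (hp : p ∈ rprimeSet d n) :
    p.2.sign ∈ ({-1, 1} : Finset ℤ) := by
  rcases hp.1.lt_or_gt with h | h <;>
    simp [Int.sign_eq_neg_one_of_neg, Int.sign_eq_one_of_pos, h]

theorem pairwiseDisjoint_rprimeSet (n : ℕ) :
    (Iio (0 : ℤ)).PairwiseDisjoint (rprimeSet · n) := by
  intro d hd d' hd' hne
  refine Set.disjoint_left.2 fun p ⟨hv, h⟩ ⟨_, h'⟩ => hne ?_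
  have : |d| = |d'| := mul_right_cancel₀ (pow_ne_zero 2 hv) (by linarith)
  rwa [abs_of_neg hd, abs_of_neg hd', neg_inj] at this

end rprimeSet

section biUnion

variable {S : Set ℤ} (n : ℕ)

theorem injOn_fst_sign_biUnion_rprimeSet (hS : ∀ d ∈ S, Squarefree d) :
    InjOn (fun p : ℕ × ℤ => (p.1, p.2.sign)) (⋃ d ∈ S, rprimeSet d n) := by
  rintro ⟨u, v⟩ hp ⟨u', v'⟩ hp' heq
  obtain ⟨rfl, hsign⟩ := Prod.mk.inj heq
  simp only [mem_iUnion] at hp hp'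
  obtain ⟨d, hd, hv, h⟩ := hp
  obtain ⟨d', hd', hv', h'⟩ := hp'
  have hnat : d.natAbs * v.natAbs ^ 2 = d'.natAbs * v'.natAbs ^ 2 := by
    have := congrArg Int.natAbs (show |d| * v ^ 2 = |d'| * v' ^ 2 by linarith)
    simpa only [Int.natAbs_mul, Int.natAbs_pow, Int.natAbs_abs] using this
  have habs := (Nat.eq_of_squarefree_of_mul_sq_eq (Int.squarefree_natAbs.2 (hS d hd))
    (Int.squarefree_natAbs.2 (hS d' hd')) (Int.natAbs_ne_zero.2 hv)
    (Int.natAbs_ne_zero.2 hv') hnat).2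
  rw [Prod.mk.injEq, ← Int.sign_mul_abs v, ← Int.sign_mul_abs v', hsign, Int.abs_eq_natAbs,
    Int.abs_eq_natAbs, habs]
  exact ⟨rfl, rfl⟩

theorem mapsTo_fst_sign_biUnion_rprimeSet :
    MapsTo (fun p : ℕ × ℤ => (p.1, p.2.sign)) (⋃ d ∈ S, rprimeSet d n)
      (Finset.range (Nat.sqrt (4 * n) + 1) ×ˢ {-1, 1} : Finset (ℕ × ℤ)) := by
  intro p hp
  obtain ⟨d, -, hp⟩ := mem_iUnion₂.1 hp
  simp only [Finset.coe_product, mem_prod, Finset.mem_coe, Finset.mem_range]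
  exact ⟨Nat.lt_succ_of_le (fst_le_sqrt_of_mem_rprimeSet hp), sign_mem_of_mem_rprimeSet hp⟩

theorem finite_biUnion_rprimeSet (hS : ∀ d ∈ S, Squarefree d) :
    (⋃ d ∈ S, rprimeSet d n).Finite :=
  Finite.of_injOn (mapsTo_fst_sign_biUnion_rprimeSet n)
    (injOn_fst_sign_biUnion_rprimeSet n hS) (Finset.finite_toSet _)

theorem ncard_biUnion_rprimeSet_le (hS : ∀ d ∈ S, Squarefree d) :
    (⋃ d ∈ S, rprimeSet d n).ncard ≤ 2 * (Nat.sqrt (4 * n) + 1) := by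
  refine (ncard_le_ncard_of_injOn _ (mapsTo_fst_sign_biUnion_rprimeSet n)
    (injOn_fst_sign_biUnion_rprimeSet n hS)).trans_eq ?_
  rw [ncard_coe_finset, Finset.card_product, Finset.card_range, mul_comm]
  rfl

end biUnion

theorem finsum_rprime_le {S : Set ℤ} (hS : ∀ d ∈ S, d < 0 ∧ Squarefree d) (n : ℕ) :
    ∑ᶠ d ∈ S, (rprime d n : ℝ) ≤ 2 * (Nat.sqrt (4 * n) + 1) := by
  set T := S ∩ Function.support fun d => (rprime d n : ℝ)
  have hT : T.Finite := by
    refine (finite_Icc (-(4 * n : ℤ)) (4 * n)).subset fun d hd => ?_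
    obtain ⟨p, hp⟩ := nonempty_of_ncard_ne_zero (by simpa [rprime_eq_ncard] using hd.2)
    exact abs_le.1 (abs_le_of_mem_rprimeSet hp)
  have hsf : ∀ d ∈ T, Squarefree d := fun d hd => (hS d hd.1).2
  have hdisj : T.PairwiseDisjoint (rprimeSet · n) :=
    (pairwiseDisjoint_rprimeSet n).subset fun d hd => (hS d hd.1).1
  have hfin : ∀ d ∈ T, (rprimeSet d n).Finite := fun d hd =>
    (finite_biUnion_rprimeSet n hsf).subset (subset_biUnion_of_mem (u := (rprimeSet · n)) hd)
  rw [← finsum_mem_inter_support, ← Nat.cast_finsum_mem hT]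
  simp only [rprime_eq_ncard]
  rw [← hT.ncard_biUnion hfin hdisj]
  exact_mod_cast ncard_biUnion_rprimeSet_le n hsf

theorem two_mul_nat_sqrt_add_one_le (n : ℕ) :
    2 * (Nat.sqrt (4 * n) + 1 : ℝ) ≤ 4 * √n + 2 := by
  have hsqrt : √(4 * n : ℝ) = 2 * √n := by
    rw [Real.sqrt_mul' 4 n.cast_nonneg, show (4 : ℝ) = 2 ^ 2 by norm_num,
      Real.sqrt_sq two_pos.le]
  have := Real.nat_sqrt_le_real_sqrt (a := 4 * n)
  push_cast at this
  linarith

theorem sum_rprime_le_general (N : ℕ) (n : ℕ) :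
    (∑ᶠ d ∈ Dset N, (rprime d n : ℝ)) ≤ 4 * Real.sqrt n + 2 :=
  (finsum_rprime_le (fun _ hd => ⟨hd.1, hd.2.1⟩) n).trans (two_mul_nat_sqrt_add_one_le n)

/-- For every `n ≥ 1`, the sum `Σ_{d ∈ 𝒟} r′_d(n)` is at most `4√n + 2`. -/
theorem sum_rprime_le (N : ℕ) (hN : 0 < N) (hNsf : Squarefree N) (n : ℕ) (hn : 1 ≤ n) :
    (∑ᶠ d ∈ Dset N, (rprime d n : ℝ)) ≤ 4 * Real.sqrt n + 2 :=
  sum_rprime_le_general N n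

end
end

section
/- For all ε > 0 and B > 0 there is a constant C, depending only on ε, B, V and F, such that for every positive squarefree integer N and every real Y ≥ 2, the sum over all triples (d,m,n) with d ∈ 𝒟, m ≥ 1 with gcd(m,N) = 1, n ≥ 1 and n·m² ≥ N^{1+ε}·Y^{ε}·|d|, of (σ₀(n)·√n · r′_d(n)/(m·n)) · |V(4π²nm²/(N|d|))| · |F(|d|/Y)|, is at most C·(NY)^{−B}. Here σ₀(n) denotes the number of divisors of n. -/
open Real

open scoped Classical

noncomputable section

/-- `z^k ≤ k^k e^z` for `z ≥ 0`, `k ≥ 1`. -/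
lemma aux_pow_le_exp (z : ℝ) (hz : 0 ≤ z) (k : ℕ) (hk : 1 ≤ k) :
    z ^ k ≤ (k : ℝ) ^ k * Real.exp z := by
  have hk0 : (0 : ℝ) < (k : ℝ) := by exact_mod_cast hk
  have h1 : z / k ≤ Real.exp (z / k) := by
    have := Real.add_one_le_exp (z / k); linarith
  have h2 : (z / k) ^ k ≤ Real.exp (z / k) ^ k :=
    pow_le_pow_left₀ (by positivity) h1 k
  have h3 : Real.exp (z / k) ^ k = Real.exp z := by
    rw [← Real.exp_nat_mul]
    congr 1
    field_simp
  have h4 : z ^ k = (k : ℝ) ^ k * (z / k) ^ k := by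
    rw [div_pow]
    field_simp
  rw [h4]
  rw [h3] at h2
  exact mul_le_mul_of_nonneg_left h2 (by positivity)

lemma aux_rprime_le (d : ℤ) (hd : d < 0) (n : ℕ) :
    rprime d n ≤ (2 * n + 1) * (4 * n + 1) := by
  classical
  set T : Finset (ℕ × ℤ) := (Finset.range (2 * n + 1)) ×ˢ (Finset.Icc (-(2 * (n : ℤ))) (2 * n))
  have hsub : {p : ℕ × ℤ | p.2 ≠ 0 ∧ (p.1 : ℤ) ^ 2 + |d| * p.2 ^ 2 = 4 * (n : ℤ)} ⊆
      (T : Set (ℕ × ℤ)) := by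
    rintro ⟨u, v⟩ ⟨hv, he⟩
    have hd1 : 1 ≤ |d| := Int.one_le_abs (by omega)
    have hv1 : 1 ≤ v ^ 2 := by
      rcases lt_or_gt_of_ne hv with h | h <;> nlinarith
    have hu0 : (0 : ℤ) ≤ (u : ℤ) := Int.natCast_nonneg u
    have hu2 : (u : ℤ) ^ 2 ≤ 4 * n := by nlinarith
    have hv2 : v ^ 2 ≤ 4 * n := by nlinarith [sq_nonneg (u : ℤ)]
    have hun : (u : ℤ) ≤ 2 * n := by nlinarith
    have hvn : v ≤ 2 * n := by nlinarith
    have hvn' : -(2 * (n : ℤ)) ≤ v := by nlinarith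
    simp only [T, Finset.coe_product, Set.mem_prod, Finset.mem_coe, Finset.mem_range,
      Finset.mem_Icc]
    constructor
    · omega
    · exact ⟨hvn', hvn⟩
  calc rprime d n
      ≤ Nat.card (T : Set (ℕ × ℤ)) := Nat.card_mono (T.finite_toSet) hsub
    _ = T.card := by rw [Nat.card_coe_set_eq, Set.ncard_coe_finset]
    _ = (2 * n + 1) * (4 * n + 1) := by
        rw [Finset.card_product, Finset.card_range, Int.card_Icc]
        simp
        omega

set_option maxHeartbeats 1000000 in
/-- The contribution of the triples `(d, m, n)` with `n m² ≥ N^{1+ε} Y^{ε} |d|` is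
`O_{ε,B}((NY)^{-B})` for every `B > 0`. -/
theorem tail_contribution_negligible
    (V : ℝ → ℝ)
    (hVdiff : ∀ x > (0 : ℝ), DifferentiableAt ℝ V x)
    (hVderivCont : ContinuousOn (deriv V) (Set.Ioi 0))
    (hV : ∀ x > (0 : ℝ), |V x| ≤ x ^ (-(1 / 4 : ℝ)) * Real.exp (-2 * Real.sqrt x))
    (hV' : ∀ x > (0 : ℝ), |x * deriv V x| ≤ x ^ (-(1 / 4 : ℝ)) * Real.exp (-2 * Real.sqrt x))
    (F : ℝ → ℝ) (hF : ContDiff ℝ (⊤ : ℕ∞) F) (hFc : HasCompactSupport F)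
    (hFs : tsupport F ⊆ Set.Ioi 0)
    (ε B : ℝ) (hε : 0 < ε) (hB : 0 < B) :
    ∃ C > (0 : ℝ), ∀ N : ℕ, 0 < N → Squarefree N → ∀ Y : ℝ, 2 ≤ Y →
      (∑' p : ℤ × ℕ × ℕ,
        if p.1 ∈ Dset N ∧ 1 ≤ p.2.1 ∧ Nat.Coprime p.2.1 N ∧ 1 ≤ p.2.2 ∧
            (N : ℝ) ^ ((1 : ℝ) + ε) * Y ^ ε * |(p.1 : ℝ)| ≤ (p.2.2 : ℝ) * (p.2.1 : ℝ) ^ 2 then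
          ((p.2.2).divisors.card : ℝ) * Real.sqrt p.2.2 * (rprime p.1 p.2.2 : ℝ) /
              ((p.2.1 : ℝ) * (p.2.2 : ℝ)) *
            |V (4 * π ^ 2 * (p.2.2 : ℝ) * (p.2.1 : ℝ) ^ 2 / ((N : ℝ) * |(p.1 : ℝ)|))| *
            |F (|(p.1 : ℝ)| / Y)|
        else 0)
        ≤ C * ((N : ℝ) * Y) ^ (-B) := by
  classical
  -- a bound for |F|
  obtain ⟨M, hM⟩ := hFc.exists_bound_of_continuous hF.continuous
  have hM' : ∀ t, |F t| ≤ M := fun t => by simpa [Real.norm_eq_abs] using hM t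
  have hM0 : 0 ≤ M := (abs_nonneg _).trans (hM' 0)
  -- a bound for the support of F
  obtain ⟨r, hr⟩ := hFc.isBounded.subset_closedBall 0
  set b : ℝ := max r 1 with hbdef
  have hb1 : (1 : ℝ) ≤ b := le_max_right _ _
  have hb0 : (0 : ℝ) < b := by linarith
  have hbF : ∀ t : ℝ, b < t → F t = 0 := by
    intro t ht
    by_contra h
    have h1 : t ∈ tsupport F := subset_tsupport F (by simpa using h)
    have h2 := hr h1
    rw [Metric.mem_closedBall, Real.dist_eq, sub_zero] at h2
    have h3 : t ≤ r := (le_abs_self t).trans h2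
    have h4 : r ≤ b := le_max_left _ _
    linarith
  -- the Basel-type constant
  have hZsum : Summable (fun n : ℕ => ((n : ℝ) ^ 2)⁻¹) :=
    Real.summable_nat_pow_inv.mpr (by norm_num)
  set Z : ℝ := ∑' n : ℕ, ((n : ℝ) ^ 2)⁻¹ with hZdef
  have hZ0 : 0 ≤ Z := tsum_nonneg (fun n => by positivity)
  -- the exponent k
  set k : ℕ := ⌈(2 * (7 + B)) / ε⌉₊ + 10 with hkdef
  have hk1 : 1 ≤ k := by omega
  have hkB : 7 + B ≤ (k : ℝ) * ε / 2 := by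
    have h1 : (2 * (7 + B)) / ε ≤ ((⌈(2 * (7 + B)) / ε⌉₊ : ℕ) : ℝ) := Nat.le_ceil _
    have h2 : ((⌈(2 * (7 + B)) / ε⌉₊ : ℕ) : ℝ) ≤ (k : ℝ) := by
      exact_mod_cast Nat.le_add_right _ 10
    have h3 : (2 * (7 + B)) / ε ≤ (k : ℝ) := le_trans h1 h2
    rw [div_le_iff₀ hε] at h3
    linarith
  refine ⟨10 ^ 20 * (M + 1) * (Z + 1) * b ^ 7 * (k : ℝ) ^ k, by positivity, ?_⟩
  intro N hN hNsf Y hY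
  have hN1 : (1 : ℝ) ≤ (N : ℝ) := by exact_mod_cast hN
  have hY0 : (0 : ℝ) < Y := by linarith
  set P : ℝ := (N : ℝ) * Y with hPdef
  have hP2 : 2 ≤ P := by nlinarith
  have hP1 : 1 ≤ P := by linarith
  have hP0 : 0 < P := by linarith
  set T : ℝ := Real.sqrt (b * P) with hTdef
  have hbP1 : 1 ≤ b * P := by nlinarith
  have hT1 : 1 ≤ T := Real.one_le_sqrt.mpr hbP1
  have hT0 : 0 < T := by linarith
  set s : ℝ := (2 * T)⁻¹ with hsdef
  have hs0 : 0 < s := by positivity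
  set E : ℝ := Real.exp (-(P ^ (ε / 2))) with hEdef
  have hE0 : 0 < E := Real.exp_pos _
  set K : ℝ := 15 * M * E with hKdef
  have hK0 : 0 ≤ K := by positivity
  -- the three component functions of the dominating function
  set hfun : ℤ → ℝ := fun d => if d < 0 ∧ |(d : ℝ)| ≤ b * Y then 1 else 0 with hhdef
  set ufun : ℕ → ℝ := fun m => Real.exp (-s) ^ m with hudef
  set wfun : ℕ → ℝ := fun n => (n : ℝ) ^ 3 * Real.exp (-(s * Real.sqrt n)) with hwdef
  have hh0 : ∀ d, 0 ≤ hfun d := fun d => by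
    simp only [hhdef]; split <;> norm_num
  have hu0 : ∀ m, 0 ≤ ufun m := fun m => by positivity
  have hw0 : ∀ n, 0 ≤ wfun n := fun n => by positivity
  -- summability and bounds for hfun
  set cI : ℤ := ⌈b * Y⌉ with hcIdef
  have hhsupp : ∀ d ∉ Finset.Icc (-cI) (-1), hfun d = 0 := by
    intro d hd
    simp only [hhdef]
    rw [if_neg]
    rintro ⟨hd1, hd2⟩
    apply hd
    rw [Finset.mem_Icc]
    have hdR : (d : ℝ) < 0 := by exact_mod_cast hd1
    rw [abs_of_neg hdR] at hd2
    have h1 : ((-d : ℤ) : ℝ) ≤ b * Y := by push_cast; linarith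
    have h2 : (-d : ℤ) ≤ cI := by
      rw [hcIdef]
      exact_mod_cast le_trans h1 (Int.le_ceil _)
    omega
  have hhsum : Summable hfun := summable_of_ne_finset_zero hhsupp
  have hbY2 : 2 ≤ b * Y := by nlinarith
  have hhle : ∑' d, hfun d ≤ 2 * (b * Y) := by
    rw [tsum_eq_sum hhsupp]
    have hcI0 : 0 ≤ cI := Int.ceil_nonneg (by positivity)
    have hcard : (((Finset.Icc (-cI) (-1)).card : ℕ) : ℝ) ≤ b * Y + 1 := by
      rw [Int.card_Icc]
      have h2 : (cI : ℝ) < b * Y + 1 := by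
        rw [hcIdef]; exact Int.ceil_lt_add_one _
      have h3 : (-1 + 1 - -cI) = cI := by ring
      rw [h3]
      rw [show (((cI.toNat : ℕ) : ℝ)) = ((cI.toNat : ℤ) : ℝ) by push_cast; ring]
      rw [Int.toNat_of_nonneg hcI0]
      linarith
    calc ∑ d ∈ Finset.Icc (-cI) (-1), hfun d
        ≤ ∑ _d ∈ Finset.Icc (-cI) (-1), (1 : ℝ) := by
          apply Finset.sum_le_sum
          intro d _
          simp only [hhdef]; split <;> norm_num
      _ = (((Finset.Icc (-cI) (-1)).card : ℕ) : ℝ) := by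
          rw [Finset.sum_const, nsmul_eq_mul, mul_one]
      _ ≤ b * Y + 1 := hcard
      _ ≤ 2 * (b * Y) := by linarith
  -- summability and bounds for ufun
  have hexps : Real.exp (-s) < 1 := Real.exp_lt_one_iff.mpr (by linarith)
  have husum : Summable ufun := summable_geometric_of_lt_one (Real.exp_nonneg _) hexps
  have hule : ∑' m, ufun m ≤ 3 * T := by
    rw [hudef, tsum_geometric_of_lt_one (Real.exp_nonneg _) hexps]
    have h1 : Real.exp (-s) ≤ (1 + s)⁻¹ := by
      rw [Real.exp_neg]
      have h2 : 1 + s ≤ Real.exp s := by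
        have := Real.add_one_le_exp s; linarith
      exact inv_anti₀ (by linarith) h2
    have h2 : s / (1 + s) ≤ 1 - Real.exp (-s) := by
      have h3 : 1 - (1 + s)⁻¹ = s / (1 + s) := by field_simp; ring
      linarith
    have h4 : 0 < s / (1 + s) := by positivity
    have h5 : (1 - Real.exp (-s))⁻¹ ≤ (s / (1 + s))⁻¹ := by
      apply inv_anti₀ h4 h2
    have h6 : (s / (1 + s))⁻¹ = 1 / s + 1 := by
      rw [inv_div]; field_simp
    have h7 : 1 / s = 2 * T := by
      rw [hsdef, one_div, inv_inv]
    calc (1 - Real.exp (-s))⁻¹ ≤ (s / (1 + s))⁻¹ := h5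
      _ = 2 * T + 1 := by rw [h6, h7]
      _ ≤ 3 * T := by linarith
  -- summability and bounds for wfun
  have hwle' : ∀ n : ℕ, wfun n ≤ (10 ^ 10 * (2 * T) ^ 10) * ((n : ℝ) ^ 2)⁻¹ := by
    intro n
    rcases Nat.eq_zero_or_pos n with rfl | hn
    · simp [hwdef]
    · have hn1R : (1 : ℝ) ≤ (n : ℝ) := by exact_mod_cast hn
      have hn0R : (0 : ℝ) < (n : ℝ) := by linarith
      have hsn1 : (1 : ℝ) ≤ Real.sqrt n := Real.one_le_sqrt.mpr hn1R
      have hz0 : 0 < s * Real.sqrt n := mul_pos hs0 (by linarith)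
      have h10 : (s * Real.sqrt n) ^ 10 ≤ (10 : ℝ) ^ 10 * Real.exp (s * Real.sqrt n) := by
        have h := aux_pow_le_exp (s * Real.sqrt n) (le_of_lt hz0) 10 (by norm_num)
        norm_num at h
        convert h using 2
        norm_num
      have hexpinv : Real.exp (-(s * Real.sqrt n)) ≤ (10 : ℝ) ^ 10 / (s * Real.sqrt n) ^ 10 := by
        rw [Real.exp_neg, ← one_div, div_le_div_iff₀ (Real.exp_pos _) (by positivity)]
        rw [one_mul]
        linarith
      calc wfun n ≤ (n : ℝ) ^ 3 * ((10 : ℝ) ^ 10 / (s * Real.sqrt n) ^ 10) := by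
            simp only [hwdef]
            exact mul_le_mul_of_nonneg_left hexpinv (by positivity)
        _ = (10 ^ 10 * (2 * T) ^ 10) * ((n : ℝ) ^ 2)⁻¹ := by
            have h5 : (Real.sqrt n) ^ 10 = (n : ℝ) ^ 5 := by
              rw [show (10 : ℕ) = 2 * 5 from rfl, pow_mul, Real.sq_sqrt (le_of_lt hn0R)]
            rw [mul_pow, h5, hsdef]
            have hT0' : (2 * T) ≠ 0 := by positivity
            field_simp
  have hwsum : Summable wfun :=
    Summable.of_nonneg_of_le hw0 hwle' (hZsum.mul_left _)
  have hwle : ∑' n, wfun n ≤ (10 ^ 10 * (2 * T) ^ 10) * Z := by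
    have := Summable.tsum_le_tsum hwle' hwsum (hZsum.mul_left _)
    rwa [tsum_mul_left] at this
  -- the dominating function
  set g : ℤ × ℕ × ℕ → ℝ := fun p => K * (hfun p.1 * (ufun p.2.1 * wfun p.2.2)) with hgdef
  have hqsum : Summable (fun q : ℕ × ℕ => ufun q.1 * wfun q.2) :=
    husum.mul_of_nonneg hwsum (fun m => hu0 m) (fun n => hw0 n)
  have hg0sum : Summable (fun p : ℤ × ℕ × ℕ => hfun p.1 * (ufun p.2.1 * wfun p.2.2)) :=
    hhsum.mul_of_nonneg hqsum (fun d => hh0 d) (fun q => mul_nonneg (hu0 _) (hw0 _))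
  have hgsum : Summable g := hg0sum.mul_left K
  have hg0 : ∀ p, 0 ≤ g p := fun p =>
    mul_nonneg hK0 (mul_nonneg (hh0 _) (mul_nonneg (hu0 _) (hw0 _)))
  -- the summand of the goal
  set f : ℤ × ℕ × ℕ → ℝ := fun p =>
    if p.1 ∈ Dset N ∧ 1 ≤ p.2.1 ∧ Nat.Coprime p.2.1 N ∧ 1 ≤ p.2.2 ∧
        (N : ℝ) ^ ((1 : ℝ) + ε) * Y ^ ε * |(p.1 : ℝ)| ≤ (p.2.2 : ℝ) * (p.2.1 : ℝ) ^ 2 then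
      ((p.2.2).divisors.card : ℝ) * Real.sqrt p.2.2 * (rprime p.1 p.2.2 : ℝ) /
          ((p.2.1 : ℝ) * (p.2.2 : ℝ)) *
        |V (4 * π ^ 2 * (p.2.2 : ℝ) * (p.2.1 : ℝ) ^ 2 / ((N : ℝ) * |(p.1 : ℝ)|))| *
        |F (|(p.1 : ℝ)| / Y)|
    else 0 with hfdef
  have hf0 : ∀ p, 0 ≤ f p := by
    intro p
    simp only [hfdef]
    split
    · exact mul_nonneg (mul_nonneg (div_nonneg (mul_nonneg (mul_nonneg (Nat.cast_nonneg _)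
        (Real.sqrt_nonneg _)) (Nat.cast_nonneg _)) (by positivity)) (abs_nonneg _)) (abs_nonneg _)
    · exact le_rfl
  have hpi1 : (1 : ℝ) ≤ 4 * π ^ 2 := by nlinarith [Real.pi_gt_three]
  -- the key pointwise bound
  have hfg : ∀ p : ℤ × ℕ × ℕ, f p ≤ g p := by
    rintro ⟨d, m, n⟩
    simp only [hfdef]
    split_ifs with hcond
    case neg => exact hg0 _
    obtain ⟨hdD, hm1, _hcop, hn1, htail⟩ := hcond
    obtain ⟨hdneg, _hdsf, -⟩ := hdD
    by_cases hF0 : F (|(d : ℝ)| / Y) = 0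
    · rw [hF0, abs_zero, mul_zero]
      exact hg0 _
    -- basic positivity facts
    have hdle' : d ≤ -1 := by omega
    have hdleR : (d : ℝ) ≤ -1 := by exact_mod_cast hdle'
    have habs1 : 1 ≤ |(d : ℝ)| := by
      rw [abs_of_neg (by linarith only [hdleR] : (d : ℝ) < 0)]
      linarith only [hdleR]
    have habs0 : 0 < |(d : ℝ)| := by linarith only [habs1]
    have hdbY : |(d : ℝ)| ≤ b * Y := by
      by_contra hcon
      push_neg at hcon
      exact hF0 (hbF _ ((lt_div_iff₀ hY0).mpr hcon))
    have hm1R : (1 : ℝ) ≤ (m : ℝ) := by exact_mod_cast hm1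
    have hn1R : (1 : ℝ) ≤ (n : ℝ) := by exact_mod_cast hn1
    have hm0R : (0 : ℝ) < (m : ℝ) := by linarith only [hm1R]
    have hn0R : (0 : ℝ) < (n : ℝ) := by linarith only [hn1R]
    set x : ℝ := 4 * π ^ 2 * (n : ℝ) * (m : ℝ) ^ 2 / ((N : ℝ) * |(d : ℝ)|) with hxdef
    have hN0R : (0 : ℝ) < (N : ℝ) := by linarith only [hN1]
    have hden0 : 0 < (N : ℝ) * |(d : ℝ)| := mul_pos hN0R habs0
    have hx0 : 0 < x := by
      rw [hxdef]
      apply div_pos _ hden0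
      exact mul_pos (mul_pos (by positivity) hn0R) (pow_pos hm0R 2)
    have hPe1 : 1 ≤ P ^ ε := by
      have := Real.rpow_le_rpow_of_exponent_le hP1 (le_of_lt hε : (0:ℝ) ≤ ε)
      rwa [Real.rpow_zero] at this
    -- x ≥ 4π² P^ε
    have hkey : (N : ℝ) ^ ((1 : ℝ) + ε) * Y ^ ε * |(d : ℝ)| =
        ((N : ℝ) * |(d : ℝ)|) * P ^ ε := by
      rw [Real.rpow_add (by linarith : (0:ℝ) < (N:ℝ)), Real.rpow_one, hPdef,
        Real.mul_rpow (by linarith : (0:ℝ) ≤ (N:ℝ)) (le_of_lt hY0)]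
      ring
    have htail' : ((N : ℝ) * |(d : ℝ)|) * P ^ ε ≤ (n : ℝ) * (m : ℝ) ^ 2 := by
      rw [← hkey]; exact htail
    have hx1 : 4 * π ^ 2 * P ^ ε ≤ x := by
      rw [hxdef, le_div_iff₀ hden0]
      have h1 := mul_le_mul_of_nonneg_left htail' (by positivity : (0:ℝ) ≤ 4 * π ^ 2)
      calc 4 * π ^ 2 * P ^ ε * ((N : ℝ) * |(d : ℝ)|)
          = 4 * π ^ 2 * (((N : ℝ) * |(d : ℝ)|) * P ^ ε) := by ring
        _ ≤ 4 * π ^ 2 * ((n : ℝ) * (m : ℝ) ^ 2) := h1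
        _ = 4 * π ^ 2 * (n : ℝ) * (m : ℝ) ^ 2 := by ring
    have hxpe : P ^ ε ≤ x := by
      have h1 : 1 * P ^ ε ≤ (4 * π ^ 2) * P ^ ε :=
        mul_le_mul_of_nonneg_right hpi1 (Real.rpow_nonneg (le_of_lt hP0) ε)
      rw [one_mul] at h1
      linarith only [h1, hx1]
    have hx1' : (1 : ℝ) ≤ x := le_trans hPe1 hxpe
    -- √x ≥ P^(ε/2)
    have hsx1 : P ^ (ε / 2) ≤ Real.sqrt x := by
      rw [Real.le_sqrt (Real.rpow_nonneg (le_of_lt hP0) _) (le_of_lt hx0)]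
      calc (P ^ (ε / 2)) ^ 2 = P ^ ε := by
            rw [← Real.rpow_natCast (P ^ (ε / 2)) 2, ← Real.rpow_mul (le_of_lt hP0)]
            norm_num
        _ ≤ x := hxpe
    -- √x ≥ √n m / T
    have hNd_le : (N : ℝ) * |(d : ℝ)| ≤ b * P := by
      calc (N : ℝ) * |(d : ℝ)| ≤ (N : ℝ) * (b * Y) :=
            mul_le_mul_of_nonneg_left hdbY (by linarith only [hN1])
        _ = b * P := by rw [hPdef]; ring
    have hsx2 : Real.sqrt n * (m : ℝ) / T ≤ Real.sqrt x := by
      rw [Real.le_sqrt (by positivity) (le_of_lt hx0)]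
      have hTsq : T ^ 2 = b * P := Real.sq_sqrt (by positivity)
      have h1 : (Real.sqrt n * (m : ℝ) / T) ^ 2 = (n : ℝ) * (m : ℝ) ^ 2 / (b * P) := by
        rw [div_pow, mul_pow, Real.sq_sqrt (le_of_lt hn0R), hTsq]
      rw [h1]
      have h2 : (n : ℝ) * (m : ℝ) ^ 2 / (b * P) ≤ (n : ℝ) * (m : ℝ) ^ 2 / ((N : ℝ) * |(d : ℝ)|) :=
        div_le_div_of_nonneg_left (by positivity) hden0 hNd_le
      have h3 : (n : ℝ) * (m : ℝ) ^ 2 / ((N : ℝ) * |(d : ℝ)|) ≤ x := by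
        rw [hxdef]
        apply div_le_div_of_nonneg_right ?_ hden0.le
        have h4 : 1 * ((n : ℝ) * (m : ℝ) ^ 2) ≤ (4 * π ^ 2) * ((n : ℝ) * (m : ℝ) ^ 2) :=
          mul_le_mul_of_nonneg_right hpi1 (by positivity)
        calc (n : ℝ) * (m : ℝ) ^ 2 = 1 * ((n : ℝ) * (m : ℝ) ^ 2) := by ring
          _ ≤ (4 * π ^ 2) * ((n : ℝ) * (m : ℝ) ^ 2) := h4
          _ = 4 * π ^ 2 * (n : ℝ) * (m : ℝ) ^ 2 := by ring
      linarith only [h2, h3]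
    have hsn1 : (1 : ℝ) ≤ Real.sqrt n := Real.one_le_sqrt.mpr hn1R
    -- 2√x ≥ P^(ε/2) + s√n + sm
    have hsum2 : P ^ (ε / 2) + s * Real.sqrt n + s * (m : ℝ) ≤ 2 * Real.sqrt x := by
      have hprod : 0 ≤ (Real.sqrt n - 1) * ((m : ℝ) - 1) :=
        mul_nonneg (by linarith only [hsn1]) (by linarith only [hm1R])
      have hX1 : (1 : ℝ) ≤ Real.sqrt n * (m : ℝ) := by nlinarith only [hprod, hsn1, hm1R]
      have hbase : Real.sqrt n + (m : ℝ) ≤ 2 * (Real.sqrt n * (m : ℝ)) := by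
        nlinarith only [hprod, hX1]
      have h1 : s * Real.sqrt n + s * (m : ℝ) ≤ Real.sqrt n * (m : ℝ) / T := by
        have h3 : s * (2 * (Real.sqrt n * (m : ℝ))) = Real.sqrt n * (m : ℝ) / T := by
          rw [hsdef]; field_simp
        calc s * Real.sqrt n + s * (m : ℝ) = s * (Real.sqrt n + (m : ℝ)) := by ring
          _ ≤ s * (2 * (Real.sqrt n * (m : ℝ))) :=
            mul_le_mul_of_nonneg_left hbase (le_of_lt hs0)
          _ = Real.sqrt n * (m : ℝ) / T := h3
      linarith only [h1, hsx1, hsx2]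
    -- the exponential bound on |V x|
    have hVx : |V x| ≤ Real.exp (-2 * Real.sqrt x) := by
      have h1 := hV x hx0
      have h2 : x ^ (-(1 / 4 : ℝ)) ≤ 1 :=
        Real.rpow_le_one_of_one_le_of_nonpos hx1' (by norm_num)
      calc |V x| ≤ x ^ (-(1 / 4 : ℝ)) * Real.exp (-2 * Real.sqrt x) := h1
        _ ≤ 1 * Real.exp (-2 * Real.sqrt x) :=
            mul_le_mul_of_nonneg_right h2 (Real.exp_nonneg _)
        _ = Real.exp (-2 * Real.sqrt x) := one_mul _
    have hexpbd : Real.exp (-2 * Real.sqrt x) ≤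
        E * (Real.exp (-(s * Real.sqrt n)) * Real.exp (-(s * (m : ℝ)))) := by
      have h1 : Real.exp (-2 * Real.sqrt x) ≤
          Real.exp (-(P ^ (ε / 2)) + (-(s * Real.sqrt n) + -(s * (m : ℝ)))) := by
        apply Real.exp_le_exp.mpr
        linarith only [hsum2]
      rw [Real.exp_add, Real.exp_add] at h1
      exact h1
    -- the arithmetic factor
    have hDc : ((n.divisors.card : ℕ) : ℝ) ≤ (n : ℝ) := by
      have h1 : n.divisors.card ≤ n := by
        have h2 : n.divisors.card ≤ (Finset.Ico 1 (n + 1)).card := by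
          apply Finset.card_le_card
          intro i hi
          rw [Nat.mem_divisors] at hi
          rw [Finset.mem_Ico]
          constructor
          · exact Nat.one_le_iff_ne_zero.mpr (fun h => by subst h; simp at hi)
          · have := Nat.le_of_dvd (by omega) hi.1; omega
        simpa using h2
      exact_mod_cast h1
    have hsnle : Real.sqrt n ≤ (n : ℝ) := by
      calc Real.sqrt n ≤ Real.sqrt ((n : ℝ) ^ 2) := Real.sqrt_le_sqrt (by nlinarith only [hn1R])
        _ = (n : ℝ) := Real.sqrt_sq (le_of_lt hn0R)
    have hrp : ((rprime d n : ℕ) : ℝ) ≤ 15 * (n : ℝ) ^ 2 := by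
      have h1 := aux_rprime_le d hdneg n
      have h1R : ((rprime d n : ℕ) : ℝ) ≤ (2 * (n : ℝ) + 1) * (4 * (n : ℝ) + 1) := by
        exact_mod_cast h1
      have h2 : (2 * (n : ℝ) + 1) * (4 * (n : ℝ) + 1) ≤ 15 * (n : ℝ) ^ 2 := by
        nlinarith only [hn1R]
      linarith only [h1R, h2]
    have hA : ((n.divisors.card : ℕ) : ℝ) * Real.sqrt n * ((rprime d n : ℕ) : ℝ) /
        ((m : ℝ) * (n : ℝ)) ≤ 15 * (n : ℝ) ^ 3 := by
      have hnum : ((n.divisors.card : ℕ) : ℝ) * Real.sqrt n * ((rprime d n : ℕ) : ℝ) ≤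
          15 * (n : ℝ) ^ 4 := by
        calc ((n.divisors.card : ℕ) : ℝ) * Real.sqrt n * ((rprime d n : ℕ) : ℝ)
            ≤ (n : ℝ) * (n : ℝ) * (15 * (n : ℝ) ^ 2) := by
              apply mul_le_mul
              apply mul_le_mul hDc hsnle (Real.sqrt_nonneg _) (le_of_lt hn0R)
              exact hrp
              exact Nat.cast_nonneg _
              positivity
          _ = 15 * (n : ℝ) ^ 4 := by ring
      have hden : (n : ℝ) ≤ (m : ℝ) * (n : ℝ) := le_mul_of_one_le_left (le_of_lt hn0R) hm1R
      calc ((n.divisors.card : ℕ) : ℝ) * Real.sqrt n * ((rprime d n : ℕ) : ℝ) /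
          ((m : ℝ) * (n : ℝ))
          ≤ 15 * (n : ℝ) ^ 4 / (n : ℝ) := by
            apply div_le_div₀ (by positivity) hnum hn0R hden
        _ = 15 * (n : ℝ) ^ 3 := by
            field_simp
    -- putting the pointwise bound together
    have ht1 : ((n.divisors.card : ℕ) : ℝ) * Real.sqrt n * ((rprime d n : ℕ) : ℝ) /
        ((m : ℝ) * (n : ℝ)) * |V x| ≤
        (15 * (n : ℝ) ^ 3) * (E * (Real.exp (-(s * Real.sqrt n)) * Real.exp (-(s * (m : ℝ))))) := by
      apply mul_le_mul hA (le_trans hVx hexpbd) (abs_nonneg _) (by positivity)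
    have ht2 : ((n.divisors.card : ℕ) : ℝ) * Real.sqrt n * ((rprime d n : ℕ) : ℝ) /
        ((m : ℝ) * (n : ℝ)) * |V x| * |F (|(d : ℝ)| / Y)| ≤
        (15 * (n : ℝ) ^ 3) * (E * (Real.exp (-(s * Real.sqrt n)) * Real.exp (-(s * (m : ℝ))))) *
          M := by
      apply mul_le_mul ht1 (hM' _) (abs_nonneg _) (by positivity)
    have hgval : g (d, m, n) = (15 * (n : ℝ) ^ 3) *
        (E * (Real.exp (-(s * Real.sqrt n)) * Real.exp (-(s * (m : ℝ))))) * M := by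
      simp only [hgdef, hhdef, hudef, hwdef]
      rw [if_pos ⟨hdneg, hdbY⟩]
      rw [← Real.exp_nat_mul]
      rw [show ((m : ℝ)) * -s = -(s * (m : ℝ)) by ring]
      ring
    rw [hgval]
    exact ht2
  -- summability of f and the comparison
  have hfsum : Summable f := Summable.of_nonneg_of_le hf0 hfg hgsum
  refine le_trans (Summable.tsum_le_tsum hfg hfsum hgsum) ?_
  -- computing the sum of g
  have e1 : ∑' p : ℤ × ℕ × ℕ, g p =
      K * ((∑' d, hfun d) * ((∑' m, ufun m) * (∑' n, wfun n))) := by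
    rw [hgdef, tsum_mul_left]
    congr 1
    rw [Summable.tsum_prod' hg0sum (fun d => hqsum.mul_left (hfun d))]
    calc ∑' (d : ℤ) (q : ℕ × ℕ), hfun d * (ufun q.1 * wfun q.2)
        = ∑' (d : ℤ), hfun d * ∑' (q : ℕ × ℕ), ufun q.1 * wfun q.2 := by
          congr 1; funext d; exact tsum_mul_left
      _ = (∑' d, hfun d) * ∑' (q : ℕ × ℕ), ufun q.1 * wfun q.2 := tsum_mul_right
      _ = (∑' d, hfun d) * ((∑' m, ufun m) * (∑' n, wfun n)) := by
          congr 1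
          rw [Summable.tsum_prod' hqsum (fun m => hwsum.mul_left (ufun m))]
          calc ∑' (m : ℕ) (n : ℕ), ufun m * wfun n
              = ∑' (m : ℕ), ufun m * ∑' (n : ℕ), wfun n := by
                congr 1; funext m; exact tsum_mul_left
            _ = (∑' m, ufun m) * (∑' n, wfun n) := tsum_mul_right
  rw [e1]
  -- bounding the product
  have hSh0 : 0 ≤ ∑' d, hfun d := tsum_nonneg hh0
  have hSu0 : 0 ≤ ∑' m, ufun m := tsum_nonneg hu0
  have hSw0 : 0 ≤ ∑' n, wfun n := tsum_nonneg hw0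
  have c1 : (∑' m, ufun m) * (∑' n, wfun n) ≤ (3 * T) * ((10 ^ 10 * (2 * T) ^ 10) * Z) :=
    mul_le_mul hule hwle hSw0 (by positivity)
  have c2 : (∑' d, hfun d) * ((∑' m, ufun m) * (∑' n, wfun n)) ≤
      (2 * (b * Y)) * ((3 * T) * ((10 ^ 10 * (2 * T) ^ 10) * Z)) :=
    mul_le_mul hhle c1 (mul_nonneg hSu0 hSw0) (by positivity)
  have c3 : K * ((∑' d, hfun d) * ((∑' m, ufun m) * (∑' n, wfun n))) ≤
      K * ((2 * (b * Y)) * ((3 * T) * ((10 ^ 10 * (2 * T) ^ 10) * Z))) :=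
    mul_le_mul_of_nonneg_left c2 hK0
  refine le_trans c3 ?_
  -- final numerical estimates
  have hT11 : T ^ 11 ≤ b ^ 6 * P ^ 6 := by
    have h1 : T ^ 11 ≤ T ^ 12 := pow_le_pow_right₀ hT1 (by norm_num)
    have h2 : T ^ 12 = (T ^ 2) ^ 6 := by ring
    have h3 : T ^ 2 = b * P := Real.sq_sqrt (by positivity)
    calc T ^ 11 ≤ T ^ 12 := h1
      _ = (b * P) ^ 6 := by rw [h2, h3]
      _ = b ^ 6 * P ^ 6 := mul_pow b P 6
  have hYP : Y ≤ P := by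
    have h1 : 1 * Y ≤ (N : ℝ) * Y := mul_le_mul_of_nonneg_right hN1 (by linarith only [hY])
    rw [one_mul] at h1
    rw [hPdef]
    exact h1
  -- P^7 E ≤ k^k P^(-B)
  have hPE : P ^ (7 : ℕ) * E ≤ (k : ℝ) ^ k * P ^ (-B) := by
    have hz0 : 0 ≤ P ^ (ε / 2) := Real.rpow_nonneg (le_of_lt hP0) _
    have h1 : (P ^ (ε / 2)) ^ k ≤ (k : ℝ) ^ k * Real.exp (P ^ (ε / 2)) :=
      aux_pow_le_exp _ hz0 k hk1
    have h2 : P ^ ((7 : ℝ) + B) ≤ (P ^ (ε / 2)) ^ k := by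
      rw [← Real.rpow_natCast (P ^ (ε / 2)) k, ← Real.rpow_mul (le_of_lt hP0)]
      apply Real.rpow_le_rpow_of_exponent_le hP1
      linarith only [hkB]
    have h3 : P ^ (7 : ℕ) * P ^ B ≤ (k : ℝ) ^ k * Real.exp (P ^ (ε / 2)) := by
      have h4 : P ^ (7 : ℕ) * P ^ B = P ^ ((7 : ℝ) + B) := by
        rw [Real.rpow_add hP0]
        congr 1
        rw [← Real.rpow_natCast P 7]
        norm_num
      rw [h4]
      exact le_trans h2 h1
    rw [hEdef, Real.rpow_neg (le_of_lt hP0), Real.exp_neg]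
    rw [show P ^ (7 : ℕ) * (Real.exp (P ^ (ε / 2)))⁻¹ =
      P ^ (7 : ℕ) / Real.exp (P ^ (ε / 2)) from rfl]
    rw [show (k : ℝ) ^ k * (P ^ B)⁻¹ = (k : ℝ) ^ k / P ^ B from rfl]
    rw [div_le_div_iff₀ (Real.exp_pos _) (Real.rpow_pos_of_pos hP0 _)]
    exact h3
  -- assembling everything
  have main : K * ((2 * (b * Y)) * ((3 * T) * ((10 ^ 10 * (2 * T) ^ 10) * Z))) =
      (92160 * 10 ^ 10) * (M * Z) * ((b * Y) * T ^ 11) * E := by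
    rw [hKdef]
    ring
  rw [main]
  have s1 : (M * Z) ≤ (M + 1) * (Z + 1) := by nlinarith only [hM0, hZ0]
  have s2 : (b * Y) * T ^ 11 ≤ (b * P) * (b ^ 6 * P ^ 6) := by
    apply mul_le_mul (mul_le_mul_of_nonneg_left hYP (by linarith)) hT11 (by positivity)
      (by positivity)
  have s3 : (92160 * 10 ^ 10 : ℝ) ≤ 10 ^ 15 := by norm_num
  have step1 : (92160 * 10 ^ 10 : ℝ) * (M * Z) * ((b * Y) * T ^ 11) * E ≤
      (10 ^ 15 : ℝ) * ((M + 1) * (Z + 1)) * ((b * P) * (b ^ 6 * P ^ 6)) * E := by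
    apply mul_le_mul_of_nonneg_right _ (le_of_lt hE0)
    apply mul_le_mul _ s2 (by positivity) (by positivity)
    apply mul_le_mul s3 s1 (mul_nonneg hM0 hZ0) (by positivity)
  refine le_trans step1 ?_
  have step2 : (10 ^ 15 : ℝ) * ((M + 1) * (Z + 1)) * ((b * P) * (b ^ 6 * P ^ 6)) * E =
      (10 ^ 15 * (M + 1) * (Z + 1) * b ^ 7) * (P ^ (7 : ℕ) * E) := by
    ring
  rw [step2]
  have step3 : (10 ^ 15 * (M + 1) * (Z + 1) * b ^ 7) * (P ^ (7 : ℕ) * E) ≤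
      (10 ^ 15 * (M + 1) * (Z + 1) * b ^ 7) * ((k : ℝ) ^ k * P ^ (-B)) := by
    apply mul_le_mul_of_nonneg_left hPE (by positivity)
  refine le_trans step3 ?_
  have step4 : (10 ^ 15 * (M + 1) * (Z + 1) * b ^ 7 : ℝ) ≤
      10 ^ 20 * (M + 1) * (Z + 1) * b ^ 7 := by
    have h1 : (10 ^ 15 : ℝ) * (M + 1) ≤ 10 ^ 20 * (M + 1) :=
      mul_le_mul_of_nonneg_right (by norm_num) (by linarith)
    have h2 : (10 ^ 15 : ℝ) * (M + 1) * (Z + 1) ≤ 10 ^ 20 * (M + 1) * (Z + 1) :=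
      mul_le_mul_of_nonneg_right h1 (by linarith)
    exact mul_le_mul_of_nonneg_right h2 (pow_nonneg (by linarith) 7)
  calc (10 ^ 15 * (M + 1) * (Z + 1) * b ^ 7) * ((k : ℝ) ^ k * P ^ (-B))
      ≤ (10 ^ 20 * (M + 1) * (Z + 1) * b ^ 7) * ((k : ℝ) ^ k * P ^ (-B)) := by
        apply mul_le_mul_of_nonneg_right step4 (by positivity)
    _ = 10 ^ 20 * (M + 1) * (Z + 1) * b ^ 7 * (k : ℝ) ^ k * P ^ (-B) := by ring

end
end

section
/- Let u be a nonnegative integer, v a nonzero integer, m and N positive integers, and Y ≥ 1 a real number. Define G(x) := (1/x) · V(4π² x m² v² / (N(x−u²))) · F((x−u²)/(v²Y)) for real x > u². Then there is a constant C depending only on F such that for all x > u²: |G(x)| ≤ C · (NY/m²)^{1/4} · x^{−5/4}, and |x·G′(x)| ≤ C · (NY/m²)^{1/4} · x^{−5/4} · (1 + u²/(Y^{1/4} |v|^{1/2} (x−u²)^{3/4})). -/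
open Real

noncomputable section

/-- The function `G(x) = (1/x) V(4π² x m² v² / (N(x−u²))) F((x−u²)/(v² Y))`. -/
def Gfun (V F : ℝ → ℝ) (u : ℕ) (v : ℤ) (m N : ℕ) (Y : ℝ) (x : ℝ) : ℝ :=
  (1 / x) * V (4 * π ^ 2 * x * (m : ℝ) ^ 2 * (v : ℝ) ^ 2 / ((N : ℝ) * (x - (u : ℝ) ^ 2))) *
    F ((x - (u : ℝ) ^ 2) / ((v : ℝ) ^ 2 * Y))

private lemma quarter_le {P Q : ℝ} (hP : 0 ≤ P) (h : P ≤ Q) :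
    P ^ (1/4 : ℝ) ≤ Q ^ (1/4 : ℝ) :=
  Real.rpow_le_rpow hP h (by norm_num)

private lemma quarter_mul {A B : ℝ} (hA : 0 ≤ A) (hB : 0 ≤ B) :
    A ^ (1/4 : ℝ) * B ^ (1/4 : ℝ) = (A * B) ^ (1/4 : ℝ) :=
  (Real.mul_rpow hA hB).symm

private lemma coeff0 {M0 M1 d : ℝ} (h0 : 0 ≤ M0) (h1 : 0 ≤ M1) (hd : 0 < d) :
    M0 * (d + 1) ≤ 3 * (M0 + M1 + 1) * (d + 1) ^ 2 := by
  nlinarith [mul_nonneg h0 (mul_nonneg hd.le hd.le), mul_nonneg h0 hd.le,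
    mul_nonneg h1 (mul_nonneg hd.le hd.le), mul_nonneg h1 hd.le, mul_nonneg hd.le hd.le]

private lemma coeff1 {M0 M1 d : ℝ} (h0 : 0 ≤ M0) (h1 : 0 ≤ M1) (hd : 0 < d) :
    M0 * (d + 1) + M1 * (d * (d + 1)) ≤ 3 * (M0 + M1 + 1) * (d + 1) ^ 2 := by
  nlinarith [mul_nonneg h0 (mul_nonneg hd.le hd.le), mul_nonneg h0 hd.le,
    mul_nonneg h1 (mul_nonneg hd.le hd.le), mul_nonneg h1 hd.le, mul_nonneg hd.le hd.le]

private lemma coeff2 {M0 M1 d : ℝ} (h0 : 0 ≤ M0) (h1 : 0 ≤ M1) (hd : 0 < d) :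
    M0 + M1 * d ≤ 3 * (M0 + M1 + 1) * (d + 1) ^ 2 := by
  nlinarith [mul_nonneg h0 (mul_nonneg hd.le hd.le), mul_nonneg h0 hd.le,
    mul_nonneg h1 (mul_nonneg hd.le hd.le), mul_nonneg h1 hd.le, mul_nonneg hd.le hd.le]

private lemma qpow_pow {z : ℝ} (hz : 0 ≤ z) : (z ^ (4 : ℕ)) ^ (1/4 : ℝ) = z := by
  rw [← Real.rpow_natCast z 4, ← Real.rpow_mul hz]
  norm_num

set_option maxHeartbeats 1000000 in
/-- Bounds for `G` and `x G′(x)`: there is a constant `C` depending only on `F` such that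
for all `x > u²`, `|G(x)| ≤ C (NY/m²)^{1/4} x^{−5/4}` and
`|x G′(x)| ≤ C (NY/m²)^{1/4} x^{−5/4} (1 + u²/(Y^{1/4} |v|^{1/2} (x−u²)^{3/4}))`. -/
theorem Gfun_bounds
    (F : ℝ → ℝ) (hF : ContDiff ℝ (⊤ : ℕ∞) F) (hFc : HasCompactSupport F)
    (hFs : tsupport F ⊆ Set.Ioi 0) :
    ∃ C > (0 : ℝ), ∀ V : ℝ → ℝ,
      (∀ x > (0 : ℝ), DifferentiableAt ℝ V x) →
      ContinuousOn (deriv V) (Set.Ioi 0) →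
      (∀ x > (0 : ℝ), |V x| ≤ x ^ (-(1 / 4 : ℝ)) * Real.exp (-2 * Real.sqrt x)) →
      (∀ x > (0 : ℝ), |x * deriv V x| ≤ x ^ (-(1 / 4 : ℝ)) * Real.exp (-2 * Real.sqrt x)) →
      ∀ (u : ℕ) (v : ℤ), v ≠ 0 → ∀ (m N : ℕ), 0 < m → 0 < N → ∀ Y : ℝ, 1 ≤ Y →
      ∀ x : ℝ, (u : ℝ) ^ 2 < x →
        |Gfun V F u v m N Y x| ≤
          C * ((N : ℝ) * Y / (m : ℝ) ^ 2) ^ ((1 / 4 : ℝ)) * x ^ (-(5 / 4 : ℝ)) ∧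
        |x * deriv (Gfun V F u v m N Y) x| ≤
          C * ((N : ℝ) * Y / (m : ℝ) ^ 2) ^ ((1 / 4 : ℝ)) * x ^ (-(5 / 4 : ℝ)) *
            (1 + (u : ℝ) ^ 2 /
              (Y ^ ((1 / 4 : ℝ)) * |(v : ℝ)| ^ ((1 / 2 : ℝ)) *
                (x - (u : ℝ) ^ 2) ^ ((3 / 4 : ℝ)))) := by
  classical
  obtain ⟨M0, hM0⟩ := hFc.exists_bound_of_continuous hF.continuous
  have hFdc : Continuous (deriv F) := hF.continuous_deriv (by simp)
  obtain ⟨M1, hM1⟩ := (hFc.deriv).exists_bound_of_continuous hFdc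
  have hM0abs : ∀ t, |F t| ≤ M0 := fun t => by simpa [Real.norm_eq_abs] using hM0 t
  have hM1abs : ∀ t, |deriv F t| ≤ M1 := fun t => by simpa [Real.norm_eq_abs] using hM1 t
  have hM0nn : 0 ≤ M0 := (abs_nonneg (F 0)).trans (hM0abs 0)
  have hM1nn : 0 ≤ M1 := (abs_nonneg (deriv F 0)).trans (hM1abs 0)
  obtain ⟨c, d, hc0, hcd, hsupp⟩ :
      ∃ c d : ℝ, 0 < c ∧ c ≤ d ∧ ∀ t ∈ tsupport F, c ≤ t ∧ t ≤ d := by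
    by_cases hne : (tsupport F).Nonempty
    · refine ⟨sInf (tsupport F), sSup (tsupport F),
        Set.mem_Ioi.mp (hFs (hFc.isCompact.sInf_mem hne)), ?_, ?_⟩
      · exact csInf_le_csSup hne hFc.isCompact.bddBelow hFc.isCompact.bddAbove
      · exact fun t ht => ⟨csInf_le hFc.isCompact.bddBelow ht,
          le_csSup hFc.isCompact.bddAbove ht⟩
    · exact ⟨1, 1, one_pos, le_rfl, fun t ht => absurd ⟨t, ht⟩ hne⟩
  have hd0 : 0 < d := lt_of_lt_of_le hc0 hcd
  refine ⟨3 * (M0 + M1 + 1) * (d + 1) ^ 2,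
    mul_pos (mul_pos three_pos (by linarith)) (by positivity), ?_⟩
  intro V hVdiff hVderivc hV hV' u v hv m N hm hN Y hY x hx
  have hπ : (3:ℝ) < π := Real.pi_gt_three
  have hπ2 : (1:ℝ) ≤ 4 * π ^ 2 := by nlinarith
  have hvne : ((v:ℝ)) ≠ 0 := Int.cast_ne_zero.mpr hv
  have hN0 : (0:ℝ) < (N:ℝ) := by exact_mod_cast hN
  have hm0 : (0:ℝ) < (m:ℝ) := by exact_mod_cast hm
  have hY0 : (0:ℝ) < Y := lt_of_lt_of_le one_pos hY
  set a : ℝ := (u : ℝ) ^ 2 with ha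
  have ha0 : 0 ≤ a := sq_nonneg _
  have hx0 : 0 < x := lt_of_le_of_lt ha0 hx
  set W : ℝ := x - a with hWdef
  have hW : 0 < W := sub_pos.mpr hx
  have hv2 : (0:ℝ) < (v:ℝ)^2 := by positivity
  set K : ℝ := 4 * π ^ 2 * (m:ℝ)^2 * (v:ℝ)^2 with hKdef
  have hK : 0 < K := by positivity
  set vb : ℝ := |(v:ℝ)| with hvbdef
  have hvb : 0 < vb := abs_pos.mpr hvne
  set s : ℝ := K * x / ((N:ℝ) * W) with hsdef
  have hs : 0 < s := by positivity
  set t : ℝ := W / ((v:ℝ)^2 * Y) with htdef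
  set Q : ℝ := ((N:ℝ) * W / K) ^ (1/4 : ℝ) with hQdef
  have hQ0 : 0 < Q := by positivity
  set R0 : ℝ := ((N : ℝ) * Y / (m : ℝ) ^ 2) ^ ((1 / 4 : ℝ)) with hR0def
  have hR00 : 0 < R0 := by positivity
  have hv12 : vb ^ ((1/2 : ℝ)) = ((v:ℝ)^2) ^ (1/4 : ℝ) := by
    rw [hvbdef, ← sq_abs, ← Real.rpow_natCast |(v:ℝ)| 2, ← Real.rpow_mul (abs_nonneg _)]
    norm_num
  clear_value a W K vb s t Q R0
  -- basic V bounds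
  have hexp : Real.exp (-2 * Real.sqrt s) ≤ 1 := by
    rw [Real.exp_le_one_iff]
    nlinarith [Real.sqrt_nonneg s]
  have hVs : |V s| ≤ s ^ (-(1/4 : ℝ)) := by
    refine (hV s hs).trans ?_
    calc s ^ (-(1/4 : ℝ)) * Real.exp (-2 * Real.sqrt s)
        ≤ s ^ (-(1/4 : ℝ)) * 1 := by gcongr
      _ = s ^ (-(1/4 : ℝ)) := mul_one _
  have hVs' : |deriv V s| ≤ s ^ (-(1/4 : ℝ)) / s := by
    rw [le_div_iff₀ hs]
    have h1 : |s * deriv V s| ≤ s ^ (-(1/4 : ℝ)) := by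
      refine (hV' s hs).trans ?_
      calc s ^ (-(1/4 : ℝ)) * Real.exp (-2 * Real.sqrt s)
          ≤ s ^ (-(1/4 : ℝ)) * 1 := by gcongr
        _ = s ^ (-(1/4 : ℝ)) := mul_one _
    calc |deriv V s| * s = |s * deriv V s| := by
          rw [abs_mul, abs_of_pos hs]; ring
      _ ≤ s ^ (-(1/4 : ℝ)) := h1
  -- power identities
  have hsQ : s ^ (-(1/4 : ℝ)) = Q * x ^ (-(1/4 : ℝ)) := by
    rw [hQdef, Real.rpow_neg hs.le, ← Real.inv_rpow hs.le,
      show s⁻¹ = ((N:ℝ) * W / K) * x⁻¹ by rw [hsdef]; field_simp,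
      Real.mul_rpow (by positivity) (by positivity), Real.inv_rpow hx0.le,
      ← Real.rpow_neg hx0.le]
  have hx54 : x ^ (-(5/4 : ℝ)) = x⁻¹ * x ^ (-(1/4 : ℝ)) := by
    rw [show (-(5/4 : ℝ)) = (-1) + (-(1/4 : ℝ)) by norm_num, Real.rpow_add hx0,
      Real.rpow_neg_one]
  have hd14 : d ^ (1/4 : ℝ) ≤ d + 1 := by
    calc d ^ (1/4 : ℝ) ≤ (d + 1) ^ (1/4 : ℝ) := quarter_le hd0.le (by linarith)
      _ ≤ (d + 1) ^ (1 : ℝ) :=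
        Real.rpow_le_rpow_of_exponent_le (by linarith) (by norm_num)
      _ = d + 1 := Real.rpow_one _
  -- the two key comparisons for Q
  have hQW : Q * W⁻¹ ≤ R0 / (Y ^ ((1 / 4 : ℝ)) * vb ^ ((1 / 2 : ℝ)) * W ^ ((3 / 4 : ℝ))) := by
    have hW34 : W ^ ((3/4 : ℝ)) = (W ^ (3:ℕ)) ^ (1/4 : ℝ) := by
      rw [← Real.rpow_natCast W 3, ← Real.rpow_mul hW.le]
      norm_num
    have hWinv : W⁻¹ = ((W ^ (4:ℕ))⁻¹) ^ (1/4 : ℝ) := by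
      rw [Real.inv_rpow (by positivity), qpow_pow hW.le]
    have lhs_eq : Q * W⁻¹ = (((N:ℝ) * W / K) * (W ^ (4:ℕ))⁻¹) ^ (1/4 : ℝ) := by
      rw [hQdef, hWinv, quarter_mul (by positivity) (by positivity)]
    have rhs_eq : R0 / (Y ^ ((1 / 4 : ℝ)) * vb ^ ((1 / 2 : ℝ)) * W ^ ((3 / 4 : ℝ)))
        = (((N:ℝ) * Y / (m:ℝ)^2) * (Y * (v:ℝ)^2 * W ^ (3:ℕ))⁻¹) ^ (1/4 : ℝ) := by
      rw [hR0def, hv12, hW34, div_eq_mul_inv,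
        quarter_mul hY0.le hv2.le, quarter_mul (by positivity) (by positivity),
        ← Real.inv_rpow (by positivity),
        quarter_mul (by positivity) (by positivity)]
    rw [lhs_eq, rhs_eq]
    apply quarter_le (by positivity)
    have e1 : ((N:ℝ) * W / K) * (W ^ (4:ℕ))⁻¹ = (N:ℝ) / (K * W ^ (3:ℕ)) := by
      field_simp
    have e2 : ((N:ℝ) * Y / (m:ℝ)^2) * (Y * (v:ℝ)^2 * W ^ (3:ℕ))⁻¹
        = (N:ℝ) / ((m:ℝ)^2 * (v:ℝ)^2 * W ^ (3:ℕ)) := by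
      field_simp
    rw [e1, e2]
    refine div_le_div_of_nonneg_left hN0.le (by positivity) ?_
    rw [hKdef]
    have hX : (0:ℝ) < (m:ℝ)^2 * (v:ℝ)^2 * W^3 := by positivity
    calc (m:ℝ)^2 * (v:ℝ)^2 * W ^ 3 = 1 * ((m:ℝ)^2 * (v:ℝ)^2 * W^3) := by ring
      _ ≤ (4 * π ^ 2) * ((m:ℝ)^2 * (v:ℝ)^2 * W^3) :=
        mul_le_mul_of_nonneg_right hπ2 hX.le
      _ = 4 * π ^ 2 * (m:ℝ)^2 * (v:ℝ)^2 * W ^ 3 := by ring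
  have hQle : W ≤ d * ((v:ℝ)^2 * Y) → Q ≤ (d + 1) * R0 := by
    intro hWd
    have h1 : (N:ℝ) * W / K ≤ d * ((N:ℝ) * Y / (m:ℝ)^2) := by
      calc (N:ℝ) * W / K ≤ (N:ℝ) * (d * ((v:ℝ)^2 * Y)) / K := by gcongr
        _ = (d * ((N:ℝ) * Y / (m:ℝ)^2)) / (4 * π ^ 2) := by
            rw [hKdef]; field_simp
        _ ≤ d * ((N:ℝ) * Y / (m:ℝ)^2) :=
            div_le_self (mul_nonneg hd0.le (by positivity)) hπ2
    rw [hQdef]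
    calc ((N:ℝ) * W / K) ^ (1/4:ℝ) ≤ (d * ((N:ℝ) * Y / (m:ℝ)^2)) ^ (1/4 : ℝ) :=
        quarter_le (by positivity) h1
      _ = d ^ (1/4 : ℝ) * R0 := by
          rw [hR0def, ← quarter_mul hd0.le (by positivity)]
      _ ≤ (d + 1) * R0 := by gcongr
  -- values of the inner functions
  have hpx : 4 * π ^ 2 * x * (m : ℝ) ^ 2 * (v : ℝ) ^ 2 / ((N : ℝ) * (x - a)) = s := by
    rw [hsdef, hKdef, hWdef]; ring
  have hqx : (x - a) / ((v:ℝ)^2 * Y) = t := by rw [htdef, hWdef]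
  -- the central bound for |(1/x) V s F t|
  have hGbound : |1 / x * V s * F t| ≤ M0 * (d + 1) * (R0 * x ^ (-(5/4 : ℝ))) := by
    by_cases hFt0 : F t = 0
    · rw [hFt0, mul_zero, abs_zero]
      have h1 : (0:ℝ) ≤ M0 * (d+1) := mul_nonneg hM0nn (by positivity)
      positivity
    · have htmem : t ∈ tsupport F := subset_tsupport F (Function.mem_support.mpr hFt0)
      obtain ⟨htc, htd⟩ := hsupp t htmem
      have hWd : W ≤ d * ((v:ℝ)^2 * Y) := by
        rw [htdef] at htd
        exact (div_le_iff₀ (by positivity)).mp htd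
      have hQd := hQle hWd
      have hFtM := hM0abs t
      calc |1 / x * V s * F t| = x⁻¹ * |V s| * |F t| := by
            rw [abs_mul, abs_mul, abs_of_pos (show (0:ℝ) < 1 / x by positivity), one_div]
        _ ≤ x⁻¹ * s ^ (-(1/4 : ℝ)) * M0 := by gcongr
        _ = M0 * (Q * x ^ (-(5/4 : ℝ))) := by rw [hsQ, hx54]; ring
        _ ≤ M0 * (((d + 1) * R0) * x ^ (-(5/4 : ℝ))) := by gcongr
        _ = M0 * (d + 1) * (R0 * x ^ (-(5/4 : ℝ))) := by ring
  constructor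
  · -- first bound
    have hGx : Gfun V F u v m N Y x = 1 / x * V s * F t := by
      rw [Gfun, ← ha, hpx, hqx]
    rw [hGx]
    calc |1 / x * V s * F t| ≤ M0 * (d + 1) * (R0 * x ^ (-(5/4 : ℝ))) := hGbound
      _ ≤ (3 * (M0 + M1 + 1) * (d + 1) ^ 2) * (R0 * x ^ (-(5/4 : ℝ))) := by
          have h1 : M0 * (d + 1) ≤ 3 * (M0 + M1 + 1) * (d + 1) ^ 2 :=
            coeff0 hM0nn hM1nn hd0
          exact mul_le_mul_of_nonneg_right h1 (by positivity)
      _ = 3 * (M0 + M1 + 1) * (d + 1) ^ 2 * R0 * x ^ (-(5 / 4 : ℝ)) := by ring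
  · -- derivative bound
    have hp : HasDerivAt (fun y => 4 * π ^ 2 * y * (m : ℝ) ^ 2 * (v : ℝ) ^ 2 / ((N : ℝ) * (y - a)))
        (-(K * a) / ((N:ℝ) * W ^ 2)) x := by
      have hn : HasDerivAt (fun y : ℝ => 4 * π ^ 2 * y * (m : ℝ) ^ 2 * (v : ℝ) ^ 2)
          (4 * π ^ 2 * (m : ℝ) ^ 2 * (v : ℝ) ^ 2) x := by
        have := (((hasDerivAt_id x).const_mul (4 * π ^ 2)).mul_const ((m:ℝ)^2)).mul_const ((v:ℝ)^2)
        simpa using this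
      have hden : HasDerivAt (fun y : ℝ => (N:ℝ) * (y - a)) (N:ℝ) x := by
        have := ((hasDerivAt_id x).sub_const a).const_mul (N:ℝ)
        simpa using this
      have hxa : x - a ≠ 0 := by rw [← hWdef]; exact hW.ne'
      have hdne : (N:ℝ) * (x - a) ≠ 0 := mul_ne_zero hN0.ne' hxa
      have h := hn.div hden hdne
      refine h.congr_deriv ?_
      rw [hKdef, hWdef]
      field_simp
      ring
    have hVd' : HasDerivAt V (deriv V s)
        (4 * π ^ 2 * x * (m : ℝ) ^ 2 * (v : ℝ) ^ 2 / ((N : ℝ) * (x - a))) := by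
      rw [hpx]; exact (hVdiff s hs).hasDerivAt
    have hVp : HasDerivAt
        (fun y => V (4 * π ^ 2 * y * (m : ℝ) ^ 2 * (v : ℝ) ^ 2 / ((N : ℝ) * (y - a))))
        (deriv V s * (-(K * a) / ((N:ℝ) * W ^ 2))) x := by
      have := hVd'.comp x hp
      exact this
    have hq : HasDerivAt (fun y : ℝ => (y - a) / ((v:ℝ)^2 * Y)) (1 / ((v:ℝ)^2 * Y)) x := by
      have := ((hasDerivAt_id x).sub_const a).div_const ((v:ℝ)^2 * Y)
      simpa [one_div] using this
    have hFq : HasDerivAt (fun y : ℝ => F ((y - a) / ((v:ℝ)^2 * Y)))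
        (deriv F t * (1 / ((v:ℝ)^2 * Y))) x := by
      have hFt' : HasDerivAt F (deriv F t) ((x - a) / ((v:ℝ)^2 * Y)) := by
        rw [hqx]; exact (hF.differentiable (by simp) t).hasDerivAt
      have := hFt'.comp x hq
      exact this.congr_deriv (by simp)
    have h1 : HasDerivAt (fun y : ℝ => 1 / y) (-(1 / x ^ 2)) x := by
      have := hasDerivAt_inv hx0.ne'
      simpa [one_div] using this
    have hG : HasDerivAt (Gfun V F u v m N Y)
        (((-(1 / x ^ 2)) * V s + (1 / x) * (deriv V s * (-(K * a) / ((N:ℝ) * W ^ 2)))) * F t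
          + ((1 / x) * V s) * (deriv F t * (1 / ((v:ℝ)^2 * Y)))) x := by
      have := (h1.mul hVp).mul hFq
      convert this using 2 <;> first | rfl | (funext y; simp only [Gfun, Pi.mul_apply, ← ha]; done) | simp [Gfun, ← ha, hpx, hqx]
    rw [hG.deriv]
    have hsplit : x * (((-(1 / x ^ 2)) * V s + (1 / x) * (deriv V s * (-(K * a) / ((N:ℝ) * W ^ 2)))) * F t
          + ((1 / x) * V s) * (deriv F t * (1 / ((v:ℝ)^2 * Y))))
        = -(1 / x * V s * F t)
          + deriv V s * (-(K * a) / ((N:ℝ) * W ^ 2)) * F t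
          + V s * deriv F t * (1 / ((v:ℝ)^2 * Y)) := by
      field_simp
    rw [hsplit]
    have habs : |(-(1 / x * V s * F t)
          + deriv V s * (-(K * a) / ((N:ℝ) * W ^ 2)) * F t
          + V s * deriv F t * (1 / ((v:ℝ)^2 * Y)))|
        ≤ |1 / x * V s * F t|
          + |deriv V s * (-(K * a) / ((N:ℝ) * W ^ 2)) * F t|
          + |V s * deriv F t * (1 / ((v:ℝ)^2 * Y))| := by
      refine (abs_add_le _ _).trans ?_
      gcongr
      refine (abs_add_le _ _).trans ?_
      simp [abs_neg]
    -- bound for the second piece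
    have hE2eq : (s ^ (-(1/4 : ℝ)) / s) * (K * a / ((N:ℝ) * W ^ 2))
        = a * (Q * W⁻¹) * x ^ (-(5/4 : ℝ)) := by
      rw [hsQ, hx54, hsdef]
      field_simp
    have hA2 : |deriv V s * (-(K * a) / ((N:ℝ) * W ^ 2)) * F t|
        ≤ M0 * (R0 * x ^ (-(5/4 : ℝ))
            * (a / (Y ^ ((1 / 4 : ℝ)) * vb ^ ((1 / 2 : ℝ)) * W ^ ((3 / 4 : ℝ))))) := by
      have hFtM := hM0abs t
      calc |deriv V s * (-(K * a) / ((N:ℝ) * W ^ 2)) * F t|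
          = |deriv V s| * (K * a / ((N:ℝ) * W ^ 2)) * |F t| := by
            rw [abs_mul, abs_mul, abs_div, abs_neg,
              abs_of_nonneg (by positivity : (0:ℝ) ≤ K * a),
              abs_of_pos (by positivity : (0:ℝ) < (N:ℝ) * W ^ 2)]
        _ ≤ (s ^ (-(1/4 : ℝ)) / s) * (K * a / ((N:ℝ) * W ^ 2)) * M0 := by gcongr
        _ = M0 * (a * (Q * W⁻¹) * x ^ (-(5/4 : ℝ))) := by rw [hE2eq]; ring
        _ ≤ M0 * (a * (R0 / (Y ^ ((1 / 4 : ℝ)) * vb ^ ((1 / 2 : ℝ)) * W ^ ((3 / 4 : ℝ))))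
              * x ^ (-(5/4 : ℝ))) := by gcongr
        _ = M0 * (R0 * x ^ (-(5/4 : ℝ))
              * (a / (Y ^ ((1 / 4 : ℝ)) * vb ^ ((1 / 2 : ℝ)) * W ^ ((3 / 4 : ℝ))))) := by
            ring
    -- bound for the third piece
    have hE3eq : s ^ (-(1/4 : ℝ)) * W⁻¹ = (Q + a * (Q * W⁻¹)) * x ^ (-(5/4 : ℝ)) := by
      have hxa : x - a ≠ 0 := by rw [← hWdef]; exact hW.ne'
      rw [hsQ, hx54, hWdef]
      field_simp
      ring
    have hA3 : |V s * deriv F t * (1 / ((v:ℝ)^2 * Y))|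
        ≤ M1 * (d * (d + 1)) * (R0 * x ^ (-(5/4 : ℝ)))
          + M1 * d * (R0 * x ^ (-(5/4 : ℝ))
            * (a / (Y ^ ((1 / 4 : ℝ)) * vb ^ ((1 / 2 : ℝ)) * W ^ ((3 / 4 : ℝ))))) := by
      by_cases hdF0 : deriv F t = 0
      · rw [hdF0]
        simp only [mul_zero, zero_mul, abs_zero]
        have h1 : (0:ℝ) ≤ M1 * (d * (d + 1)) * (R0 * x ^ (-(5/4 : ℝ))) :=
          mul_nonneg (mul_nonneg hM1nn (by positivity)) (by positivity)
        have h2 : (0:ℝ) ≤ M1 * d * (R0 * x ^ (-(5/4 : ℝ))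
            * (a / (Y ^ ((1 / 4 : ℝ)) * vb ^ ((1 / 2 : ℝ)) * W ^ ((3 / 4 : ℝ))))) :=
          mul_nonneg (mul_nonneg hM1nn hd0.le) (by positivity)
        linarith
      · have htmem : t ∈ tsupport F := support_deriv_subset (Function.mem_support.mpr hdF0)
        obtain ⟨htc, htd⟩ := hsupp t htmem
        have hWd : W ≤ d * ((v:ℝ)^2 * Y) := by
          rw [htdef] at htd
          exact (div_le_iff₀ (by positivity)).mp htd
        have hvY : 1 / ((v:ℝ)^2 * Y) ≤ d / W := by
          rw [div_le_div_iff₀ (by positivity) hW]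
          linarith
        have hdFM := hM1abs t
        have hQd := hQle hWd
        have hQW' := hQW
        calc |V s * deriv F t * (1 / ((v:ℝ)^2 * Y))|
            = |V s| * |deriv F t| * (1 / ((v:ℝ)^2 * Y)) := by
              rw [abs_mul, abs_mul, abs_of_pos (show (0:ℝ) < 1 / ((v:ℝ)^2 * Y) by positivity)]
          _ ≤ s ^ (-(1/4 : ℝ)) * M1 * (d / W) := by gcongr
          _ = M1 * d * (s ^ (-(1/4 : ℝ)) * W⁻¹) := by ring
          _ = M1 * d * ((Q + a * (Q * W⁻¹)) * x ^ (-(5/4 : ℝ))) := by rw [hE3eq]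
          _ ≤ M1 * d * (((d + 1) * R0
                + a * (R0 / (Y ^ ((1 / 4 : ℝ)) * vb ^ ((1 / 2 : ℝ)) * W ^ ((3 / 4 : ℝ)))))
                * x ^ (-(5/4 : ℝ))) := by gcongr
          _ = M1 * (d * (d + 1)) * (R0 * x ^ (-(5/4 : ℝ)))
                + M1 * d * (R0 * x ^ (-(5/4 : ℝ))
                  * (a / (Y ^ ((1 / 4 : ℝ)) * vb ^ ((1 / 2 : ℝ)) * W ^ ((3 / 4 : ℝ))))) := by
              ring
    -- assemble
    refine habs.trans ?_
    have hbra : 0 ≤ a / (Y ^ ((1 / 4 : ℝ)) * vb ^ ((1 / 2 : ℝ)) * W ^ ((3 / 4 : ℝ))) := by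
      positivity
    have hR : 0 < R0 * x ^ (-(5/4 : ℝ)) := by positivity
    have hc1 : M0 * (d + 1) + M1 * (d * (d + 1)) ≤ 3 * (M0 + M1 + 1) * (d + 1) ^ 2 :=
      coeff1 hM0nn hM1nn hd0
    have hc2 : M0 + M1 * d ≤ 3 * (M0 + M1 + 1) * (d + 1) ^ 2 :=
      coeff2 hM0nn hM1nn hd0
    calc |1 / x * V s * F t|
          + |deriv V s * (-(K * a) / ((N:ℝ) * W ^ 2)) * F t|
          + |V s * deriv F t * (1 / ((v:ℝ)^2 * Y))|
        ≤ M0 * (d + 1) * (R0 * x ^ (-(5/4 : ℝ)))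
          + M0 * (R0 * x ^ (-(5/4 : ℝ))
            * (a / (Y ^ ((1 / 4 : ℝ)) * vb ^ ((1 / 2 : ℝ)) * W ^ ((3 / 4 : ℝ)))))
          + (M1 * (d * (d + 1)) * (R0 * x ^ (-(5/4 : ℝ)))
            + M1 * d * (R0 * x ^ (-(5/4 : ℝ))
              * (a / (Y ^ ((1 / 4 : ℝ)) * vb ^ ((1 / 2 : ℝ)) * W ^ ((3 / 4 : ℝ)))))) := by
          exact add_le_add (add_le_add hGbound hA2) hA3
      _ = (M0 * (d + 1) + M1 * (d * (d + 1))) * (R0 * x ^ (-(5/4 : ℝ)))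
          + (M0 + M1 * d) * ((R0 * x ^ (-(5/4 : ℝ)))
            * (a / (Y ^ ((1 / 4 : ℝ)) * vb ^ ((1 / 2 : ℝ)) * W ^ ((3 / 4 : ℝ))))) := by
          ring
      _ ≤ (3 * (M0 + M1 + 1) * (d + 1) ^ 2) * (R0 * x ^ (-(5/4 : ℝ)))
          + (3 * (M0 + M1 + 1) * (d + 1) ^ 2) * ((R0 * x ^ (-(5/4 : ℝ)))
            * (a / (Y ^ ((1 / 4 : ℝ)) * vb ^ ((1 / 2 : ℝ)) * W ^ ((3 / 4 : ℝ))))) :=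
          add_le_add (mul_le_mul_of_nonneg_right hc1 hR.le)
            (mul_le_mul_of_nonneg_right hc2 (mul_nonneg hR.le hbra))
      _ = 3 * (M0 + M1 + 1) * (d + 1) ^ 2 * R0 * x ^ (-(5 / 4 : ℝ))
            * (1 + a / (Y ^ ((1 / 4 : ℝ)) * vb ^ ((1 / 2 : ℝ)) * W ^ ((3 / 4 : ℝ)))) := by
          ring

end
end
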